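/- Inductive extension step: suppose (Ω, π, A, P, Q) is a Bayesian opinion framework with first speaker q whose Bayesian dialogue at a fixed state ω* has opinion sequence (b₂, b₃, …, b_T, b_T, …) with consensus at b_T from time T − 1 on, and let b₁ be a real number with 0 < b₁ < 1. Then there exists a Bayesian opinion framework (Ω*, π*, A*, P*, Q*) with first speaker p and a state ω** ∈ Ω* whose Bayesian dialogue at the fixed state ω** has opinion sequence beginning (b₁, b₂, …, b_T), with consensus at time T at b_T. -/
import Mathlib


/- Formalization of "Rational Dialogues" (Geanakoplos–Polemarchakis).

A Bayesian opinion framework on a finite type `Ω` consists of a strictly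
positive probability `π` on `Ω`, an event `A : Finset Ω`, and two partitions
given by their cell maps `P Q : Ω → Finset Ω`.  The agents speak alternately;
the listener refines her partition by the speaker's announced opinion
function.  `dialogue π A P Q pFirst ω₀ t` is the opinion announced at
(0-indexed) time `t` at the fixed state `ω₀`, where `pFirst = true` means
agent `p` (whose partition is `P`) speaks first. -/

namespace RationalDialogues

variable {Ω : Type}

/-- The measure of a finite set of states. -/
noncomputable def mass [Fintype Ω] (π : Ω → ℝ) (s : Finset Ω) : ℝ :=
  ∑ ω ∈ s, π ω

/-- `C` is the cell map of a partition of `Ω`: every point lies in its own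
cell, and any point of a cell has that same cell. -/
def IsPartition [Fintype Ω] (C : Ω → Finset Ω) : Prop :=
  (∀ ω, ω ∈ C ω) ∧ ∀ ω ω', ω' ∈ C ω → C ω' = C ω

/-- The Bayesian opinion of the agent with cell map `C` at state `ω`:
the conditional probability of `A` given the cell `C ω`. -/
noncomputable def opin [Fintype Ω] [DecidableEq Ω] (π : Ω → ℝ) (A : Finset Ω)
    (C : Ω → Finset Ω) (ω : Ω) : ℝ :=
  mass π (C ω ∩ A) / mass π (C ω)

open Classical in
/-- The refinement `D ∨ c_A` of the listener's partition `D` by the speaker's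
announced opinion function (the speaker's cell map being `C`):
`[D ∨ c_A](ω) = D(ω) ∩ {ω' : opinion_C(ω') = opinion_C(ω)}`. -/
noncomputable def refineBy [Fintype Ω] [DecidableEq Ω] (π : Ω → ℝ) (A : Finset Ω)
    (C D : Ω → Finset Ω) : Ω → Finset Ω :=
  fun ω => (D ω).filter (fun ω' => opin π A C ω' = opin π A C ω)

/-- Agent `p` is the speaker at (0-indexed) time `n`. -/
def pSpeaksAt (pFirst : Bool) (n : ℕ) : Prop := (pFirst = true ↔ Even n)

open Classical in
/-- The pair of partitions (cell maps of `p` and `q`) at (0-indexed) time `n`,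
starting from `(P, Q)` at time `0`, where at each time the current speaker's
opinion function refines the listener's partition for the next period. -/
noncomputable def partsAt [Fintype Ω] [DecidableEq Ω] (π : Ω → ℝ) (A : Finset Ω)
    (P Q : Ω → Finset Ω) (pFirst : Bool) : ℕ → (Ω → Finset Ω) × (Ω → Finset Ω)
  | 0 => (P, Q)
  | n + 1 =>
      let C := partsAt π A P Q pFirst n
      if pSpeaksAt pFirst n then (C.1, refineBy π A C.1 C.2)
      else (refineBy π A C.2 C.1, C.2)

open Classical in
/-- The Bayesian dialogue at the fixed state `ω₀`: the opinion announced at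
(0-indexed) time `n` by the time-`n` speaker, given his/her current cell. -/
noncomputable def dialogue [Fintype Ω] [DecidableEq Ω] (π : Ω → ℝ) (A : Finset Ω)
    (P Q : Ω → Finset Ω) (pFirst : Bool) (ω₀ : Ω) (n : ℕ) : ℝ :=
  if pSpeaksAt pFirst n then opin π A (partsAt π A P Q pFirst n).1 ω₀
  else opin π A (partsAt π A P Q pFirst n).2 ω₀

/-- `(π, P, Q)` is a Bayesian opinion framework: `π` is a strictly positive
probability on the finite type `Ω` and `P`, `Q` are partitions. -/
def IsBOF [Fintype Ω] (π : Ω → ℝ) (P Q : Ω → Finset Ω) : Prop :=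
  (∀ ω, 0 < π ω) ∧ (∑ ω, π ω = 1) ∧ IsPartition P ∧ IsPartition Q

end RationalDialogues

open RationalDialogues


set_option linter.unusedSectionVars false
namespace RDAux
open RationalDialogues Finset

variable {Ω : Type} [Fintype Ω] [DecidableEq Ω]

lemma mass_smul (c : ℝ) (π : Ω → ℝ) (s : Finset Ω) :
    mass (fun ω => c * π ω) s = c * mass π s := by
  simp [mass, Finset.mul_sum]

lemma opin_smul {c : ℝ} (hc : c ≠ 0) (π : Ω → ℝ) (A : Finset Ω) (C : Ω → Finset Ω) (ω : Ω) :
    opin (fun ω => c * π ω) A C ω = opin π A C ω := by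
  simp [opin, mass_smul, mul_div_mul_left _ _ hc]

lemma refineBy_smul {c : ℝ} (hc : c ≠ 0) (π : Ω → ℝ) (A : Finset Ω) (C D : Ω → Finset Ω) :
    refineBy (fun ω => c * π ω) A C D = refineBy π A C D := by
  funext ω
  ext ω'
  simp [refineBy, opin_smul hc]

lemma partsAt_smul {c : ℝ} (hc : c ≠ 0) (π : Ω → ℝ) (A : Finset Ω) (P Q : Ω → Finset Ω)
    (pf : Bool) (n : ℕ) :
    partsAt (fun ω => c * π ω) A P Q pf n = partsAt π A P Q pf n := by
  induction n with
  | zero => rfl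
  | succ n ih => simp only [partsAt, ih, refineBy_smul hc]

lemma dialogue_smul {c : ℝ} (hc : c ≠ 0) (π : Ω → ℝ) (A : Finset Ω) (P Q : Ω → Finset Ω)
    (pf : Bool) (ω₀ : Ω) (n : ℕ) :
    dialogue (fun ω => c * π ω) A P Q pf ω₀ n = dialogue π A P Q pf ω₀ n := by
  unfold dialogue
  rw [partsAt_smul hc]
  split <;> rw [opin_smul hc]

lemma mass_pos {π : Ω → ℝ} (hπ : ∀ ω, 0 < π ω) {s : Finset Ω} (hs : s.Nonempty) :
    0 < mass π s :=
  Finset.sum_pos (fun i _ => hπ i) hs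

open Classical in
lemma partsAt_succ (π : Ω → ℝ) (A : Finset Ω) (P Q : Ω → Finset Ω) (pf : Bool) (n : ℕ) :
    partsAt π A P Q pf (n + 1) =
      if pSpeaksAt pf n then
        ((partsAt π A P Q pf n).1,
          refineBy π A (partsAt π A P Q pf n).1 (partsAt π A P Q pf n).2)
      else (refineBy π A (partsAt π A P Q pf n).2 (partsAt π A P Q pf n).1,
          (partsAt π A P Q pf n).2) := rfl

/-! ### The construction -/

def pi0 (π f1 f2 : Ω → ℝ) : Ω × Fin 3 → ℝ :=
  fun x => if x.2 = 0 then π x.1 else if x.2 = 1 then f1 x.1 else f2 x.1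

def bigA (A : Finset Ω) : Finset (Ω × Fin 3) :=
  univ.filter (fun y => (y.2 = 0 ∧ y.1 ∈ A) ∨ y.2 = 1)

def bigP (P : Ω → Finset Ω) : Ω × Fin 3 → Finset (Ω × Fin 3) :=
  fun x => univ.filter (fun y => y.1 ∈ P x.1)

def bigQ (Q : Ω → Finset Ω) : Ω × Fin 3 → Finset (Ω × Fin 3) :=
  fun x => if x.2 = 0 then univ.filter (fun y => y.2 = 0 ∧ y.1 ∈ Q x.1)
           else univ.filter (fun y => y.1 = x.1 ∧ ¬ y.2 = 0)

def emb (s : Finset Ω) : Finset (Ω × Fin 3) := s.image (fun ω => (ω, 0))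

lemma mem_emb {s : Finset Ω} {y : Ω × Fin 3} : y ∈ emb s ↔ y.1 ∈ s ∧ y.2 = 0 := by
  constructor
  · intro hy
    obtain ⟨a, ha, rfl⟩ := Finset.mem_image.1 hy
    exact ⟨ha, rfl⟩
  · rintro ⟨h1, h2⟩
    exact Finset.mem_image.2 ⟨y.1, h1, by rw [← h2]⟩

lemma mass_filter (π f1 f2 : Ω → ℝ) (p : Ω × Fin 3 → Prop) [DecidablePred p] :
    mass (pi0 π f1 f2) (univ.filter p) =
      ∑ ω, ((if p (ω, 0) then π ω else 0) +
        ((if p (ω, 1) then f1 ω else 0) + (if p (ω, 2) then f2 ω else 0))) := by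
  rw [mass, Finset.sum_filter, Fintype.sum_prod_type]
  refine Finset.sum_congr rfl fun ω _ => ?_
  rw [Fin.sum_univ_three]
  simp only [pi0, if_pos (show ((0:Fin 3)) = 0 from rfl), if_neg (show ¬((1:Fin 3)) = 0 by decide),
    if_pos (show ((1:Fin 3)) = 1 from rfl), if_neg (show ¬((2:Fin 3)) = 0 by decide),
    if_neg (show ¬((2:Fin 3)) = 1 by decide), if_neg (show ¬((0:Fin 3)) = 1 by decide),
    eq_self_iff_true, if_true]
  ring

lemma mass_emb (π f1 f2 : Ω → ℝ) (s : Finset Ω) :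
    mass (pi0 π f1 f2) (emb s) = mass π s := by
  rw [mass, emb, Finset.sum_image (by intro a _ b _ hab; simpa using hab)]
  simp [mass, pi0]

lemma emb_inter_bigA (A : Finset Ω) (s : Finset Ω) :
    emb s ∩ bigA A = emb (s ∩ A) := by
  ext y
  simp only [Finset.mem_inter, mem_emb, bigA, Finset.mem_filter, Finset.mem_univ, true_and]
  constructor
  · rintro ⟨⟨h1, h2⟩, h3 | h3⟩
    · exact ⟨⟨h1, h3.2⟩, h2⟩
    · rw [h2] at h3; exact absurd h3 (by decide)
  · rintro ⟨⟨h1, h2⟩, h3⟩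
    exact ⟨⟨h1, h3⟩, Or.inl ⟨h3, h2⟩⟩

lemma opin_emb (π f1 f2 : Ω → ℝ) (A : Finset Ω) (C : Ω → Finset Ω)
    (C' : Ω × Fin 3 → Finset (Ω × Fin 3)) (ω : Ω) (hC : C' (ω, 0) = emb (C ω)) :
    opin (pi0 π f1 f2) (bigA A) C' (ω, 0) = opin π A C ω := by
  rw [opin, hC, emb_inter_bigA, mass_emb, mass_emb, opin]

end RDAux

namespace RDAux
open RationalDialogues Finset

variable {Ω : Type} [Fintype Ω] [DecidableEq Ω]

lemma isPartition_bigP {P : Ω → Finset Ω} (hP : IsPartition P) : IsPartition (bigP P) := by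
  constructor
  · intro x
    exact Finset.mem_filter.2 ⟨Finset.mem_univ _, hP.1 x.1⟩
  · intro x y hy
    have : y.1 ∈ P x.1 := (Finset.mem_filter.1 hy).2
    unfold bigP
    rw [hP.2 x.1 y.1 this]

lemma isPartition_bigQ {Q : Ω → Finset Ω} (hQ : IsPartition Q) : IsPartition (bigQ Q) := by
  constructor
  · intro x
    by_cases hx : x.2 = 0
    · rw [bigQ, if_pos hx]
      exact Finset.mem_filter.2 ⟨Finset.mem_univ _, hx, hQ.1 x.1⟩
    · rw [bigQ, if_neg hx]
      exact Finset.mem_filter.2 ⟨Finset.mem_univ _, rfl, hx⟩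
  · intro x y hy
    by_cases hx : x.2 = 0
    · rw [bigQ, if_pos hx] at hy
      obtain ⟨-, hy2, hy1⟩ := Finset.mem_filter.1 hy
      rw [bigQ, if_pos hy2, bigQ, if_pos hx, hQ.2 x.1 y.1 hy1]
    · rw [bigQ, if_neg hx] at hy
      obtain ⟨-, hy1, hy2⟩ := Finset.mem_filter.1 hy
      rw [bigQ, if_neg hy2, bigQ, if_neg hx, hy1]

lemma bigQ_zero (Q : Ω → Finset Ω) (ω : Ω) : bigQ Q (ω, 0) = emb (Q ω) := by
  ext y
  rw [bigQ, if_pos rfl]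
  simp only [Finset.mem_filter, Finset.mem_univ, true_and, mem_emb]
  tauto

section withf

variable (π f1 f2 : Ω → ℝ) (A : Finset Ω)

lemma mass_bigP (P : Ω → Finset Ω) (x : Ω × Fin 3) :
    mass (pi0 π f1 f2) (bigP P x) = ∑ ω, (if ω ∈ P x.1 then π ω + f1 ω + f2 ω else 0) := by
  rw [bigP, mass_filter]
  refine Finset.sum_congr rfl fun ω _ => ?_
  by_cases hω : ω ∈ P x.1 <;> simp [hω] <;> ring

lemma mass_bigP_inter (P : Ω → Finset Ω) (x : Ω × Fin 3) :
    mass (pi0 π f1 f2) (bigP P x ∩ bigA A) =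
      ∑ ω, (if ω ∈ P x.1 then (if ω ∈ A then π ω else 0) + f1 ω else 0) := by
  have hset : bigP P x ∩ bigA A =
      univ.filter (fun y => y.1 ∈ P x.1 ∧ ((y.2 = 0 ∧ y.1 ∈ A) ∨ y.2 = 1)) := by
    ext y
    simp only [Finset.mem_inter, bigP, bigA, Finset.mem_filter, Finset.mem_univ, true_and]
  rw [hset, mass_filter]
  refine Finset.sum_congr rfl fun ω _ => ?_
  by_cases hω : ω ∈ P x.1 <;> by_cases hA : ω ∈ A <;>
    simp [hω, hA, show ¬((1:Fin 3)) = 0 by decide, show ¬((2:Fin 3)) = 0 by decide,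
      show ¬((2:Fin 3)) = 1 by decide]

/-- p's opinion is `b0` everywhere. -/
lemma opin_bigP {P : Ω → Finset Ω} (hP : IsPartition P) {b0 : ℝ}
    (hπ : ∀ ω, 0 < π ω) (hf1 : ∀ ω, 0 < f1 ω) (hf2 : ∀ ω, 0 < f2 ω)
    (hkey : ∀ ω, (if ω ∈ A then π ω else 0) + f1 ω = b0 * (π ω + f1 ω + f2 ω))
    (x : Ω × Fin 3) :
    opin (pi0 π f1 f2) (bigA A) (bigP P) x = b0 := by
  have hnum : mass (pi0 π f1 f2) (bigP P x ∩ bigA A) =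
      b0 * mass (pi0 π f1 f2) (bigP P x) := by
    rw [mass_bigP, mass_bigP_inter, Finset.mul_sum]
    refine Finset.sum_congr rfl fun ω _ => ?_
    by_cases hω : ω ∈ P x.1 <;> simp [hω, hkey ω]
  have hpos : 0 < mass (pi0 π f1 f2) (bigP P x) := by
    refine mass_pos ?_ ⟨x, (isPartition_bigP hP).1 x⟩
    intro y
    rw [pi0]
    split
    · exact hπ y.1
    split
    · exact hf1 y.1
    · exact hf2 y.1
  rw [opin, hnum, mul_div_assoc, div_self (ne_of_gt hpos), mul_one]

/-- q's opinion at a dummy state. -/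
lemma opin_bigQ_dummy (Q : Ω → Finset Ω) (ω : Ω) (j : Fin 3) (hj : ¬ j = 0) :
    opin (pi0 π f1 f2) (bigA A) (bigQ Q) (ω, j) = f1 ω / (f1 ω + f2 ω) := by
  have hcell : bigQ Q (ω, j) = univ.filter (fun y => y.1 = ω ∧ ¬ y.2 = 0) := by
    rw [bigQ, if_neg hj]
  have hm : mass (pi0 π f1 f2) (bigQ Q (ω, j)) = f1 ω + f2 ω := by
    rw [hcell, mass_filter]
    rw [show ∑ ω', ((if (ω' = ω ∧ ¬((0:Fin 3)) = 0) then π ω' else 0) +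
      ((if (ω' = ω ∧ ¬((1:Fin 3)) = 0) then f1 ω' else 0) +
       (if (ω' = ω ∧ ¬((2:Fin 3)) = 0) then f2 ω' else 0))) =
      ∑ ω', (if ω' = ω then f1 ω' + f2 ω' else 0) from
      Finset.sum_congr rfl fun ω' _ => by
        by_cases hω' : ω' = ω <;>
          simp [hω', show ¬((1:Fin 3)) = 0 by decide, show ¬((2:Fin 3)) = 0 by decide]]
    rw [Finset.sum_ite_eq' Finset.univ ω (fun ω' => f1 ω' + f2 ω')]
    simp
  have hmi : mass (pi0 π f1 f2) (bigQ Q (ω, j) ∩ bigA A) = f1 ω := by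
    have hset : bigQ Q (ω, j) ∩ bigA A =
        univ.filter (fun y => y.1 = ω ∧ (¬ y.2 = 0 ∧ ((y.2 = 0 ∧ y.1 ∈ A) ∨ y.2 = 1))) := by
      rw [hcell]
      ext y
      simp only [Finset.mem_inter, bigA, Finset.mem_filter, Finset.mem_univ, true_and]
      tauto
    rw [hset, mass_filter]
    rw [show ∑ ω', ((if (ω' = ω ∧ (¬((0:Fin 3)) = 0 ∧ (((0:Fin 3)) = 0 ∧ ω' ∈ A ∨ ((0:Fin 3)) = 1))) then π ω' else 0) +
      ((if (ω' = ω ∧ (¬((1:Fin 3)) = 0 ∧ (((1:Fin 3)) = 0 ∧ ω' ∈ A ∨ ((1:Fin 3)) = 1))) then f1 ω' else 0) +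
       (if (ω' = ω ∧ (¬((2:Fin 3)) = 0 ∧ (((2:Fin 3)) = 0 ∧ ω' ∈ A ∨ ((2:Fin 3)) = 1))) then f2 ω' else 0))) =
      ∑ ω', (if ω' = ω then f1 ω' else 0) from
      Finset.sum_congr rfl fun ω' _ => by
        by_cases hω' : ω' = ω <;>
          simp [hω', show ¬((1:Fin 3)) = 0 by decide, show ¬((2:Fin 3)) = 0 by decide,
            show ¬((2:Fin 3)) = 1 by decide]]
    rw [Finset.sum_ite_eq' Finset.univ ω f1]
    simp
  rw [opin, hm, hmi]

end withf

/-- Existence of the dummy weights. -/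
lemma exists_f (π : Ω → ℝ) (A : Finset Ω) (Q : Ω → Finset Ω)
    (hπ : ∀ ω, 0 < π ω) {b0 : ℝ} (hb0 : 0 < b0) (hb1 : b0 < 1) :
    ∃ f1 f2 : Ω → ℝ, (∀ ω, 0 < f1 ω) ∧ (∀ ω, 0 < f2 ω) ∧
      (∀ ω, (if ω ∈ A then π ω else 0) + f1 ω = b0 * (π ω + f1 ω + f2 ω)) ∧
      (∀ ω ω', f1 ω / (f1 ω + f2 ω) ≠ opin π A Q ω') := by
  have hδex : ∀ ω : Ω, ∃ x : ℝ, 0 < x ∧ x < 1 ∧ (if ω ∈ A then x < b0 else b0 < x) ∧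
      ∀ ω', x ≠ opin π A Q ω' := by
    intro ω
    classical
    set V : Finset ℝ := Finset.image (fun ω' => opin π A Q ω') Finset.univ with hV
    have hIoo : (if ω ∈ A then Set.Ioo (0:ℝ) b0 else Set.Ioo b0 1).Infinite := by
      split <;> exact Set.Ioo_infinite (by linarith)
    obtain ⟨x, hxI, hxV⟩ := (hIoo.diff V.finite_toSet).nonempty
    have hxV' : ∀ ω', x ≠ opin π A Q ω' := by
      intro ω' heq
      exact hxV (by rw [hV]; simpa using ⟨ω', heq.symm⟩)
    by_cases hA : ω ∈ A
    · rw [if_pos hA] at hxI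
      exact ⟨x, hxI.1, by linarith [hxI.2], by rw [if_pos hA]; exact hxI.2, hxV'⟩
    · rw [if_neg hA] at hxI
      exact ⟨x, by linarith [hxI.1], hxI.2, by rw [if_neg hA]; exact hxI.1, hxV'⟩
  choose δ hδ0 hδ1 hδif hδne using hδex
  set f1 : Ω → ℝ := fun ω => (π ω * ((if ω ∈ A then 1 else 0) - b0)) * δ ω / (b0 - δ ω)
    with hf1def
  set f2 : Ω → ℝ := fun ω => f1 ω * (1 - δ ω) / δ ω with hf2def
  have hf1 : ∀ ω, 0 < f1 ω := by
    intro ω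
    simp only [hf1def]
    by_cases hA : ω ∈ A
    · have h1 : δ ω < b0 := by have := hδif ω; rwa [if_pos hA] at this
      rw [if_pos hA]
      have : (0:ℝ) < π ω * (1 - b0) := mul_pos (hπ ω) (by linarith)
      exact div_pos (mul_pos this (hδ0 ω)) (by linarith)
    · have h1 : b0 < δ ω := by have := hδif ω; rwa [if_neg hA] at this
      rw [if_neg hA]
      have h2 : π ω * ((0:ℝ) - b0) < 0 := by nlinarith [hπ ω]
      exact div_pos_of_neg_of_neg (by nlinarith [hδ0 ω]) (by linarith)
  have hf2 : ∀ ω, 0 < f2 ω := by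
    intro ω
    simp only [hf2def]
    exact div_pos (mul_pos (hf1 ω) (by linarith [hδ1 ω])) (hδ0 ω)
  have hsum : ∀ ω, f1 ω + f2 ω = f1 ω / δ ω := by
    intro ω
    have hδ0' : δ ω ≠ 0 := ne_of_gt (hδ0 ω)
    simp only [hf2def]
    field_simp
    ring
  refine ⟨f1, f2, hf1, hf2, ?_, ?_⟩
  · intro ω
    have hδb : δ ω ≠ b0 := by
      by_cases hA : ω ∈ A
      · have := hδif ω; rw [if_pos hA] at this; linarith
      · have := hδif ω; rw [if_neg hA] at this; linarith
    have hδ0' : δ ω ≠ 0 := ne_of_gt (hδ0 ω)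
    have hb0δ : b0 - δ ω ≠ 0 := fun hc => hδb (by linarith)
    rw [show b0 * (π ω + f1 ω + f2 ω) = b0 * (π ω + (f1 ω + f2 ω)) by ring, hsum ω, hf1def]
    by_cases hA : ω ∈ A <;> simp only [if_pos, if_neg, hA, if_true, if_false] <;>
      field_simp <;> ring
  · intro ω ω'
    have : f1 ω / (f1 ω + f2 ω) = δ ω := by
      rw [hsum ω, div_div_eq_mul_div, mul_comm (f1 ω) (δ ω),
        mul_div_assoc, div_self (ne_of_gt (hf1 ω)), mul_one]
    rw [this]
    exact hδne ω ω'

end RDAux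

namespace RDAux
open RationalDialogues Finset

variable {Ω : Type} [Fintype Ω] [DecidableEq Ω]

lemma refine_commute (π f1 f2 : Ω → ℝ) (A : Finset Ω) (C D : Ω → Finset Ω)
    (C' D' : Ω × Fin 3 → Finset (Ω × Fin 3))
    (hC : ∀ ω, C' (ω, 0) = emb (C ω)) (hD : ∀ ω, D' (ω, 0) = emb (D ω)) (ω : Ω) :
    refineBy (pi0 π f1 f2) (bigA A) C' D' (ω, 0) = emb (refineBy π A C D ω) := by
  have hop : ∀ ω', opin (pi0 π f1 f2) (bigA A) C' (ω', 0) = opin π A C ω' :=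
    fun ω' => opin_emb π f1 f2 A C C' ω' (hC ω')
  ext y
  obtain ⟨y1, y2⟩ := y
  simp only [refineBy, Finset.mem_filter, hD ω, mem_emb]
  constructor
  · rintro ⟨⟨h1, h2⟩, h3⟩
    subst h2
    rw [hop y1, hop ω] at h3
    exact ⟨⟨h1, h3⟩, rfl⟩
  · rintro ⟨⟨h1, h3⟩, h2⟩
    subst h2
    rw [hop y1, hop ω]
    exact ⟨⟨h1, rfl⟩, h3⟩

lemma refine_base (π f1 f2 : Ω → ℝ) (A : Finset Ω) (P Q : Ω → Finset Ω)
    (hne : ∀ ω ω', f1 ω / (f1 ω + f2 ω) ≠ opin π A Q ω') (ω : Ω) :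
    refineBy (pi0 π f1 f2) (bigA A) (bigQ Q) (bigP P) (ω, 0) = emb (refineBy π A Q P ω) := by
  have hop0 : ∀ ω', opin (pi0 π f1 f2) (bigA A) (bigQ Q) (ω', 0) = opin π A Q ω' :=
    fun ω' => opin_emb π f1 f2 A Q (bigQ Q) ω' (bigQ_zero Q ω')
  ext y
  obtain ⟨y1, y2⟩ := y
  simp only [refineBy, Finset.mem_filter, bigP, Finset.mem_univ, true_and, mem_emb]
  by_cases hy2 : y2 = 0
  · subst hy2
    rw [hop0 y1, hop0 ω]
    simp
  · constructor
    · rintro ⟨h1, h2⟩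
      exfalso
      rw [opin_bigQ_dummy π f1 f2 A Q y1 y2 hy2, hop0 ω] at h2
      exact hne y1 ω h2
    · rintro ⟨h1, h2⟩
      exact absurd h2 hy2

end RDAux

/-- **inductive extension step.** Suppose a Bayesian opinion
framework with first speaker `q` has, at the fixed state `ω₀`, opinion
sequence `(b₂, …, b_T, b_T, …)` with consensus at `b_T` from time `T - 1` on,
and let `0 < b₁ < 1`.  Then there is a Bayesian opinion framework with first
speaker `p` and a state `ω₁` whose dialogue begins `(b₁, b₂, …, b_T)` with
consensus at time `T` at `b_T`.
(0-indexed: `b t` is the opinion `b_{t+1}`; the given dialogue announces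
`b (t+1)` at its time `t`, and reaches consensus from its time `T - 2` on.) -/
theorem inductive_extension_step
    {Ω : Type} [Fintype Ω] [DecidableEq Ω] (π : Ω → ℝ) (A : Finset Ω)
    (P Q : Ω → Finset Ω) (ω₀ : Ω) (h : IsBOF π P Q)
    (T : ℕ) (hT : 2 ≤ T) (b : ℕ → ℝ)
    (hseq : ∀ t, t + 1 < T → dialogue π A P Q false ω₀ t = b (t + 1))
    (hcons : ∀ t, T - 2 ≤ t → dialogue π A P Q false ω₀ t = b (T - 1))
    (hb1 : 0 < b 0 ∧ b 0 < 1) :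
    ∃ (Ω' : Type) (_ : Fintype Ω') (_ : DecidableEq Ω') (π' : Ω' → ℝ)
      (A' : Finset Ω') (P' Q' : Ω' → Finset Ω') (ω₁ : Ω'),
      IsBOF π' P' Q' ∧
      (∀ t, t < T → dialogue π' A' P' Q' true ω₁ t = b t) ∧
      (∀ t, T - 1 ≤ t → dialogue π' A' P' Q' true ω₁ t = b (T - 1)) := by
  classical
  obtain ⟨hπpos, hπsum, hPpart, hQpart⟩ := h
  obtain ⟨hb0pos, hb0lt⟩ := hb1
  obtain ⟨f1, f2, hf1, hf2, hkey, hne⟩ := RDAux.exists_f π A Q hπpos hb0pos hb0lt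
  set PP0 : Ω × Fin 3 → ℝ := RDAux.pi0 π f1 f2 with hPP0
  have hPPpos : ∀ x, 0 < PP0 x := by
    intro x
    rw [hPP0]
    unfold RDAux.pi0
    split
    · exact hπpos x.1
    split
    · exact hf1 x.1
    · exact hf2 x.1
  set S : ℝ := ∑ x, PP0 x with hS
  have hSpos : 0 < S := Finset.sum_pos (fun x _ => hPPpos x) ⟨(ω₀, 0), Finset.mem_univ _⟩
  have hSne : S⁻¹ ≠ 0 := inv_ne_zero (ne_of_gt hSpos)
  -- basic speaking-order facts
  have hps0 : pSpeaksAt true 0 := by simp [pSpeaksAt]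
  have hps1 : ¬ pSpeaksAt true 1 := by simp [pSpeaksAt]
  have hpsf0 : ¬ pSpeaksAt false 0 := by simp [pSpeaksAt]
  -- p's opinion is constant b 0
  have hPop : ∀ x, opin PP0 (RDAux.bigA A) (RDAux.bigP P) x = b 0 :=
    RDAux.opin_bigP π f1 f2 A hPpart hπpos hf1 hf2 hkey
  have hrefPQ : refineBy PP0 (RDAux.bigA A) (RDAux.bigP P) (RDAux.bigQ Q) = RDAux.bigQ Q := by
    funext x
    unfold refineBy
    exact Finset.filter_true_of_mem (fun y _ => by rw [hPop y, hPop x])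
  have hN1 : partsAt PP0 (RDAux.bigA A) (RDAux.bigP P) (RDAux.bigQ Q) true 1 =
      (RDAux.bigP P, RDAux.bigQ Q) := by
    rw [RDAux.partsAt_succ, if_pos hps0,
      show partsAt PP0 (RDAux.bigA A) (RDAux.bigP P) (RDAux.bigQ Q) true 0 =
        (RDAux.bigP P, RDAux.bigQ Q) from rfl, hrefPQ]
  have hN2 : partsAt PP0 (RDAux.bigA A) (RDAux.bigP P) (RDAux.bigQ Q) true 2 =
      (refineBy PP0 (RDAux.bigA A) (RDAux.bigQ Q) (RDAux.bigP P), RDAux.bigQ Q) := by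
    rw [RDAux.partsAt_succ, hN1, if_neg hps1]
  have hO1 : partsAt π A P Q false 1 = (refineBy π A Q P, Q) := by
    rw [RDAux.partsAt_succ, if_neg hpsf0]
    rfl
  -- the invariant
  have hinv : ∀ m, 1 ≤ m →
      (∀ ω, (partsAt PP0 (RDAux.bigA A) (RDAux.bigP P) (RDAux.bigQ Q) true (m + 1)).1 (ω, 0) =
        RDAux.emb ((partsAt π A P Q false m).1 ω)) ∧
      (∀ ω, (partsAt PP0 (RDAux.bigA A) (RDAux.bigP P) (RDAux.bigQ Q) true (m + 1)).2 (ω, 0) =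
        RDAux.emb ((partsAt π A P Q false m).2 ω)) := by
    intro m hm
    induction m, hm using Nat.le_induction with
    | base =>
      constructor
      · intro ω
        rw [hN2, hO1]
        exact RDAux.refine_base π f1 f2 A P Q hne ω
      · intro ω
        rw [hN2, hO1]
        exact RDAux.bigQ_zero Q ω
    | succ n hn ih =>
      obtain ⟨ih1, ih2⟩ := ih
      have hpar : pSpeaksAt true (n + 1) ↔ pSpeaksAt false n := by
        simp [pSpeaksAt, Nat.even_add_one]
      by_cases hp : pSpeaksAt false n
      · constructor
        · intro ω
          rw [RDAux.partsAt_succ PP0 (RDAux.bigA A) (RDAux.bigP P) (RDAux.bigQ Q) true (n + 1),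
            RDAux.partsAt_succ π A P Q false n, if_pos (hpar.mpr hp), if_pos hp]
          exact ih1 ω
        · intro ω
          rw [RDAux.partsAt_succ PP0 (RDAux.bigA A) (RDAux.bigP P) (RDAux.bigQ Q) true (n + 1),
            RDAux.partsAt_succ π A P Q false n, if_pos (hpar.mpr hp), if_pos hp]
          exact RDAux.refine_commute π f1 f2 A _ _ _ _ ih1 ih2 ω
      · constructor
        · intro ω
          rw [RDAux.partsAt_succ PP0 (RDAux.bigA A) (RDAux.bigP P) (RDAux.bigQ Q) true (n + 1),
            RDAux.partsAt_succ π A P Q false n, if_neg (fun hc => hp (hpar.mp hc)), if_neg hp]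
          exact RDAux.refine_commute π f1 f2 A _ _ _ _ ih2 ih1 ω
        · intro ω
          rw [RDAux.partsAt_succ PP0 (RDAux.bigA A) (RDAux.bigP P) (RDAux.bigQ Q) true (n + 1),
            RDAux.partsAt_succ π A P Q false n, if_neg (fun hc => hp (hpar.mp hc)), if_neg hp]
          exact ih2 ω
  -- the dialogue shift
  have hshift : ∀ m, dialogue PP0 (RDAux.bigA A) (RDAux.bigP P) (RDAux.bigQ Q) true (ω₀, 0) (m + 1) =
      dialogue π A P Q false ω₀ m := by
    intro m
    cases m with
    | zero =>
      unfold dialogue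
      rw [if_neg hps1, if_neg hpsf0, hN1]
      exact RDAux.opin_emb π f1 f2 A Q (RDAux.bigQ Q) ω₀ (RDAux.bigQ_zero Q ω₀)
    | succ n =>
      obtain ⟨ih1, ih2⟩ := hinv (n + 1) (by omega)
      have hpar : pSpeaksAt true (n + 1 + 1) ↔ pSpeaksAt false (n + 1) := by
        simp [pSpeaksAt, Nat.even_add_one]
      unfold dialogue
      by_cases hp : pSpeaksAt false (n + 1)
      · rw [if_pos (hpar.mpr hp), if_pos hp]
        exact RDAux.opin_emb π f1 f2 A _ _ ω₀ (ih1 ω₀)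
      · rw [if_neg (fun hc => hp (hpar.mp hc)), if_neg hp]
        exact RDAux.opin_emb π f1 f2 A _ _ ω₀ (ih2 ω₀)
  refine ⟨Ω × Fin 3, inferInstance, inferInstance, fun x => S⁻¹ * PP0 x, RDAux.bigA A,
    RDAux.bigP P, RDAux.bigQ Q, (ω₀, 0), ⟨?_, ?_, ?_, ?_⟩, ?_, ?_⟩
  · exact fun x => mul_pos (inv_pos.2 hSpos) (hPPpos x)
  · rw [← Finset.mul_sum, ← hS, inv_mul_cancel₀ (ne_of_gt hSpos)]
  · exact RDAux.isPartition_bigP hPpart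
  · exact RDAux.isPartition_bigQ hQpart
  · intro t ht
    rw [RDAux.dialogue_smul hSne]
    cases t with
    | zero =>
      unfold dialogue
      rw [if_pos hps0]
      exact hPop (ω₀, 0)
    | succ m =>
      rw [hshift m]
      exact hseq m (by omega)
  · intro t ht
    obtain ⟨m, rfl⟩ : ∃ m, t = m + 1 := ⟨t - 1, by omega⟩
    rw [RDAux.dialogue_smul hSne, hshift m]
    exact hcons m (by omega)
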